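/- Fix z ∈ ℂ ∖ ℝ. For every k ≥ 0 one has ∫_ℝ p_k(x)/(x − z) dμ(x) = w(z) p_k(z) + r_k(z), and consequently (by Bessel's inequality) Σ_{k=0}^∞ |w(z) p_k(z) + r_k(z)|² ≤ ∫_ℝ |x − z|^{−2} dμ(x) < ∞. -/

import Mathlib

open MeasureTheory Polynomial

/-- The topological support of a Borel measure on `ℝ`. -/
def measSupport (μ : Measure ℝ) : Set ℝ := {x : ℝ | ∀ U ∈ nhds x, μ U ≠ 0}

/-!
Both `k ↦ ∫ p_k(x) / (x - z) dμ` and `k ↦ w p_k(z) + r_k(z)` solve the three-term recurrence of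
the Jacobi matrix at `z`: the first because `x / (x - z) = 1 + z / (x - z)` and
`∫ p_{k+1} dμ = 0`, the second because `p` and `r` do. They agree for `k = 0, 1`, hence for all
`k`. The first sequence consists of the Fourier coefficients of the bounded function `(x - z)⁻¹`
in the orthonormal family `(p_k)` of `L²(μ)`, so Bessel's inequality gives the bound.
-/

open ComplexConjugate

section Jacobi

variable {R : Type*} [CommRing R] [Algebra ℝ R] {a b : ℕ → ℝ}

def IsJacobiSolution (a b : ℕ → ℝ) (z : R) (u : ℕ → R) : Prop :=
  ∀ k, z * u (k + 1) = algebraMap ℝ R (a (k + 1)) * u (k + 2) +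
    algebraMap ℝ R (b (k + 1)) * u (k + 1) + algebraMap ℝ R (a k) * u k

lemma IsJacobiSolution.map {S : Type*} [CommRing S] [Algebra ℝ S] {z : R} {u : ℕ → R}
    (h : IsJacobiSolution a b z u) (f : R →ₐ[ℝ] S) :
    IsJacobiSolution a b (f z) fun k => f (u k) :=
  fun k => by simpa using congrArg f (h k)

lemma IsJacobiSolution.const_mul_add {z : R} {u v : ℕ → R} (c : R)
    (hu : IsJacobiSolution a b z u) (hv : IsJacobiSolution a b z v) :
    IsJacobiSolution a b z fun k => c * u k + v k :=
  fun k => by linear_combination c * hu k + hv k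

lemma IsJacobiSolution.ext {K : Type*} [Field K] [Algebra ℝ K] {z : K} {u v : ℕ → K}
    (ha : ∀ k, a k ≠ 0) (hu : IsJacobiSolution a b z u) (hv : IsJacobiSolution a b z v)
    (h0 : u 0 = v 0) (h1 : u 1 = v 1) : u = v := by
  funext k
  induction k using Nat.twoStepInduction with
  | zero => exact h0
  | one => exact h1
  | more k ih₀ ih₁ =>
    refine mul_left_cancel₀ ((map_ne_zero (algebraMap ℝ K)).mpr (ha (k + 1))) ?_
    linear_combination hv k - hu k + (z - algebraMap ℝ K (b (k + 1))) * ih₁ -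
      algebraMap ℝ K (a k) * ih₀

end Jacobi

section Moments

def HasFiniteMoments (μ : Measure ℝ) : Prop :=
  ∀ m : ℕ, Integrable (fun x : ℝ => |x| ^ m) μ

variable {μ : Measure ℝ}

lemma HasFiniteMoments.integrable_eval (hμ : HasFiniteMoments μ) (q : ℝ[X]) :
    Integrable (fun x => q.eval x) μ := by
  have hpow (i : ℕ) : Integrable (fun x : ℝ => x ^ i) μ :=
    (hμ i).mono' (continuous_pow i).aestronglyMeasurable (by simp)
  simp_rw [eval_eq_sum_range]
  exact integrable_finsetSum _ fun i _ => (hpow i).const_mul _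

lemma HasFiniteMoments.memLp_two_ofReal_eval (hμ : HasFiniteMoments μ) (q : ℝ[X]) :
    MemLp (fun x => ((q.eval x : ℝ) : ℂ)) 2 μ := by
  rw [memLp_two_iff_integrable_sq_norm (by fun_prop)]
  simpa [sq] using hμ.integrable_eval (q * q)

lemma Polynomial.eq_one_of_degree_eq_zero_of_integral_mul_self [IsProbabilityMeasure μ]
    {q : ℝ[X]} (hdeg : q.degree = 0) (hlead : 0 < q.leadingCoeff)
    (hnorm : ∫ x, q.eval x * q.eval x ∂μ = 1) : q = 1 := by
  have hnat : q.natDegree = 0 := natDegree_eq_of_degree_eq_some hdeg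
  have hq : q = C q.leadingCoeff := by
    rw [leadingCoeff, hnat]
    exact eq_C_of_natDegree_eq_zero hnat
  rw [hq] at hnorm ⊢
  simp only [eval_C, integral_const, probReal_univ, smul_eq_mul, one_mul] at hnorm
  rw [show q.leadingCoeff = 1 by nlinarith, C_1]

end Moments

section Stieltjes

variable {μ : Measure ℝ} {z : ℂ}

lemma Complex.ofReal_sub_ne_zero_of_im_ne_zero (hz : z.im ≠ 0) (x : ℝ) : (x : ℂ) - z ≠ 0 :=
  fun h => hz (by simpa using congrArg Complex.im h)

lemma Complex.norm_inv_ofReal_sub_le (hz : z.im ≠ 0) (x : ℝ) :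
    ‖((x : ℂ) - z)⁻¹‖ ≤ |z.im|⁻¹ := by
  rw [norm_inv]
  refine inv_anti₀ (abs_pos.mpr hz) ?_
  simpa using Complex.abs_im_le_norm ((x : ℂ) - z)

lemma aestronglyMeasurable_inv_ofReal_sub (hz : z.im ≠ 0) :
    AEStronglyMeasurable (fun x : ℝ => ((x : ℂ) - z)⁻¹) μ :=
  (Continuous.inv₀ (by fun_prop) (Complex.ofReal_sub_ne_zero_of_im_ne_zero hz)).aestronglyMeasurable

lemma memLp_inv_ofReal_sub [IsFiniteMeasure μ] (hz : z.im ≠ 0) (p : ENNReal) :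
    MemLp (fun x : ℝ => ((x : ℂ) - z)⁻¹) p μ :=
  .of_bound (aestronglyMeasurable_inv_ofReal_sub hz) _
    (.of_forall (Complex.norm_inv_ofReal_sub_le hz))

lemma HasFiniteMoments.integrable_eval_div_ofReal_sub (hμ : HasFiniteMoments μ)
    (hz : z.im ≠ 0) (q : ℝ[X]) :
    Integrable (fun x : ℝ => ((q.eval x : ℝ) : ℂ) / ((x : ℂ) - z)) μ := by
  simp_rw [div_eq_mul_inv]
  exact (hμ.integrable_eval q).ofReal.mul_bdd (aestronglyMeasurable_inv_ofReal_sub hz)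
    (.of_forall (Complex.norm_inv_ofReal_sub_le hz))

variable (μ z) in
/-- The Stieltjes transform at `z` of the signed measure `q dμ`. -/
noncomputable def weightedStieltjes (q : ℝ[X]) : ℂ :=
  ∫ x : ℝ, ((q.eval x : ℝ) : ℂ) / ((x : ℂ) - z) ∂μ

lemma weightedStieltjes_one : weightedStieltjes μ z 1 = ∫ x : ℝ, ((x : ℂ) - z)⁻¹ ∂μ := by
  simp [weightedStieltjes]

lemma weightedStieltjes_add (hμ : HasFiniteMoments μ) (hz : z.im ≠ 0) (q₁ q₂ : ℝ[X]) :
    weightedStieltjes μ z (q₁ + q₂) = weightedStieltjes μ z q₁ + weightedStieltjes μ z q₂ := by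
  simp only [weightedStieltjes, eval_add, Complex.ofReal_add, add_div]
  exact integral_add (hμ.integrable_eval_div_ofReal_sub hz q₁)
    (hμ.integrable_eval_div_ofReal_sub hz q₂)

lemma weightedStieltjes_C_mul (c : ℝ) (q : ℝ[X]) :
    weightedStieltjes μ z (C c * q) = c * weightedStieltjes μ z q := by
  simp only [weightedStieltjes, eval_mul, eval_C, Complex.ofReal_mul, mul_div_assoc]
  exact integral_const_mul _ _

lemma weightedStieltjes_X_mul (hμ : HasFiniteMoments μ) (hz : z.im ≠ 0) (q : ℝ[X]) :
    weightedStieltjes μ z (X * q) = (∫ x, q.eval x ∂μ : ℝ) + z * weightedStieltjes μ z q := by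
  have hsplit (x : ℝ) : (((X * q).eval x : ℝ) : ℂ) / ((x : ℂ) - z)
      = ((q.eval x : ℝ) : ℂ) + z * (((q.eval x : ℝ) : ℂ) / ((x : ℂ) - z)) := by
    have := Complex.ofReal_sub_ne_zero_of_im_ne_zero hz x
    rw [eval_mul, eval_X]
    push_cast
    field_simp
    ring
  have hq : Integrable (fun x => ((q.eval x : ℝ) : ℂ)) μ := (hμ.integrable_eval q).ofReal
  simp only [weightedStieltjes, hsplit]
  rw [integral_add hq ((hμ.integrable_eval_div_ofReal_sub hz q).const_mul z),
    integral_const_mul, integral_complex_ofReal]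

variable {a b : ℕ → ℝ} {p r : ℕ → ℝ[X]}

lemma isJacobiSolution_weightedStieltjes (hμ : HasFiniteMoments μ) (hz : z.im ≠ 0)
    (hrec : IsJacobiSolution a b X p) (hmean : ∀ k, ∫ x, (p (k + 1)).eval x ∂μ = 0) :
    IsJacobiSolution a b z fun k => weightedStieltjes μ z (p k) := by
  intro k
  have := weightedStieltjes_X_mul hμ hz (p (k + 1))
  simp only [hrec k, hmean k, algebraMap_eq, weightedStieltjes_add hμ hz,
    weightedStieltjes_C_mul, Complex.ofReal_zero, zero_add] at this
  exact this.symm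

theorem weightedStieltjes_eq_mul_aeval_add [IsProbabilityMeasure μ] (hμ : HasFiniteMoments μ)
    (hz : z.im ≠ 0) (ha : ∀ k, a k ≠ 0) (hp0 : p 0 = 1)
    (hmean : ∀ k, ∫ x, (p (k + 1)).eval x ∂μ = 0) (hrec : IsJacobiSolution a b X p)
    (hrec0 : X * p 0 = C (a 0) * p 1 + C (b 0) * p 0) (hr0 : r 0 = 0) (hr1 : r 1 = C (a 0)⁻¹)
    (hrrec : IsJacobiSolution a b X r) (k : ℕ) :
    weightedStieltjes μ z (p k) = weightedStieltjes μ z 1 * aeval z (p k) + aeval z (r k) := by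
  set w := weightedStieltjes μ z 1
  have hsol : IsJacobiSolution a b z fun k => w * aeval z (p k) + aeval z (r k) := by
    simpa only [aeval_X] using (hrec.map (aeval z)).const_mul_add w (hrrec.map (aeval z))
  refine congrFun ((isJacobiSolution_weightedStieltjes hμ hz hrec hmean).ext ha hsol
    (by simp [w, hp0, hr0]) ?_) k
  have hW := weightedStieltjes_X_mul hμ hz (p 0)
  rw [hrec0, weightedStieltjes_add hμ hz, weightedStieltjes_C_mul, weightedStieltjes_C_mul,
    hp0] at hW
  simp only [eval_one, integral_const, probReal_univ, smul_eq_mul, mul_one,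
    Complex.ofReal_one] at hW
  have hP : z = a 0 * aeval z (p 1) + b 0 := by
    simpa [hp0] using congrArg (aeval z) hrec0
  have ha0 : (a 0 : ℂ) ≠ 0 := Complex.ofReal_ne_zero.mpr (ha 0)
  simp only [hr1, aeval_C, Complex.coe_algebraMap, Complex.ofReal_inv]
  refine mul_left_cancel₀ ha0 ?_
  linear_combination hW + w * hP - mul_inv_cancel₀ ha0

end Stieltjes

namespace MeasureTheory

variable {α ι : Type*} [MeasurableSpace α] {μ : Measure α}

lemma MemLp.inner_toLp_eq_integral {f g : α → ℂ} (hf : MemLp f 2 μ) (hg : MemLp g 2 μ) :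
    inner ℂ (hf.toLp f) (hg.toLp g) = ∫ x, conj (f x) * g x ∂μ := by
  rw [L2.inner_def]
  refine integral_congr_ae ?_
  filter_upwards [hf.coeFn_toLp, hg.coeFn_toLp] with x hfx hgx
  rw [hfx, hgx, RCLike.inner_apply']

lemma MemLp.norm_toLp_sq_eq_integral {f : α → ℂ} (hf : MemLp f 2 μ) :
    ‖hf.toLp f‖ ^ 2 = ∫ x, ‖f x‖ ^ 2 ∂μ := by
  rw [← inner_self_eq_norm_sq (𝕜 := ℂ), hf.inner_toLp_eq_integral hf]
  simp_rw [Complex.conj_mul']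
  norm_cast

lemma orthonormal_toLp [DecidableEq ι] {φ : ι → α → ℂ} (hφ : ∀ i, MemLp (φ i) 2 μ)
    (horth : ∀ i j, ∫ x, conj (φ i x) * φ j x ∂μ = if i = j then 1 else 0) :
    Orthonormal ℂ fun i => (hφ i).toLp (φ i) := by
  rw [orthonormal_iff_ite]
  intro i j
  rw [MemLp.inner_toLp_eq_integral, horth]

theorem summable_and_tsum_sq_norm_integral_conj_mul_le [DecidableEq ι] {φ : ι → α → ℂ}
    (hφ : ∀ i, MemLp (φ i) 2 μ)
    (horth : ∀ i j, ∫ x, conj (φ i x) * φ j x ∂μ = if i = j then 1 else 0)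
    {f : α → ℂ} (hf : MemLp f 2 μ) :
    Summable (fun i => ‖∫ x, conj (φ i x) * f x ∂μ‖ ^ 2) ∧
      ∑' i, ‖∫ x, conj (φ i x) * f x ∂μ‖ ^ 2 ≤ ∫ x, ‖f x‖ ^ 2 ∂μ := by
  have hON := orthonormal_toLp hφ horth
  simp only [← fun i => (hφ i).inner_toLp_eq_integral hf, ← hf.norm_toLp_sq_eq_integral]
  exact ⟨hON.inner_products_summable _, hON.tsum_inner_products_le _⟩

end MeasureTheory

theorem stieltjes_coefficients_bessel_general (μ : Measure ℝ) [IsProbabilityMeasure μ]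
    (hmom : ∀ m : ℕ, Integrable (fun x : ℝ => |x| ^ m) μ)
    (p : ℕ → Polynomial ℝ)
    (hdeg : ∀ n, (p n).degree = n)
    (hlead : ∀ n, 0 < (p n).leadingCoeff)
    (horth : ∀ n m, ∫ x, (p n).eval x * (p m).eval x ∂μ = if n = m then 1 else 0)
    (a b : ℕ → ℝ) (hapos : ∀ k, 0 < a k)
    (hrec : ∀ k : ℕ, X * p (k + 1) =
      C (a (k + 1)) * p (k + 2) + C (b (k + 1)) * p (k + 1) + C (a k) * p k)
    (hrec0 : X * p 0 = C (a 0) * p 1 + C (b 0) * p 0)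
    (r : ℕ → Polynomial ℝ)
    (hr0 : r 0 = 0) (hr1 : r 1 = C (a 0)⁻¹)
    (hrrec : ∀ k : ℕ, X * r (k + 1) =
      C (a (k + 1)) * r (k + 2) + C (b (k + 1)) * r (k + 1) + C (a k) * r k)
    (z : ℂ) (hz : z.im ≠ 0)
    (w : ℂ) (hw : w = ∫ x : ℝ, ((x : ℂ) - z)⁻¹ ∂μ) :
    (∀ k : ℕ, ∫ x : ℝ, (((p k).eval x : ℝ) : ℂ) / ((x : ℂ) - z) ∂μ
        = w * Polynomial.aeval z (p k) + Polynomial.aeval z (r k)) ∧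
    Integrable (fun x : ℝ => ‖(x : ℂ) - z‖⁻¹ ^ 2) μ ∧
    Summable (fun k : ℕ => ‖w * Polynomial.aeval z (p k) + Polynomial.aeval z (r k)‖ ^ 2) ∧
    ∑' k : ℕ, ‖w * Polynomial.aeval z (p k) + Polynomial.aeval z (r k)‖ ^ 2
      ≤ ∫ x : ℝ, ‖(x : ℂ) - z‖⁻¹ ^ 2 ∂μ := by
  have hp0 : p 0 = 1 :=
    eq_one_of_degree_eq_zero_of_integral_mul_self (hdeg 0) (hlead 0) (by simpa using horth 0 0)
  have hmean (k : ℕ) : ∫ x, (p (k + 1)).eval x ∂μ = 0 := by simpa [hp0] using horth 0 (k + 1)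
  have hident (k : ℕ) : ∫ x : ℝ, (((p k).eval x : ℝ) : ℂ) / ((x : ℂ) - z) ∂μ
      = w * aeval z (p k) + aeval z (r k) := by
    rw [hw, ← weightedStieltjes_one]
    exact weightedStieltjes_eq_mul_aeval_add hmom hz (fun k => (hapos k).ne') hp0 hmean hrec
      hrec0 hr0 hr1 hrrec k
  have hON (i j : ℕ) : ∫ x, conj (((p i).eval x : ℝ) : ℂ) * (((p j).eval x : ℝ) : ℂ) ∂μ
      = if i = j then 1 else 0 := by
    simp_rw [Complex.conj_ofReal, ← Complex.ofReal_mul, integral_complex_ofReal, horth]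
    split_ifs <;> simp
  have hf := memLp_inv_ofReal_sub (μ := μ) hz 2
  obtain ⟨hsum, hle⟩ := summable_and_tsum_sq_norm_integral_conj_mul_le
    (fun k => HasFiniteMoments.memLp_two_ofReal_eval hmom (p k)) hON hf
  have hsq := (memLp_two_iff_integrable_sq_norm hf.1).mp hf
  simp only [Complex.conj_ofReal, ← div_eq_mul_inv, hident, norm_inv] at hsum hle hsq
  exact ⟨hident, hsq, hsum, hle⟩

/-- Fix `z ∈ ℂ \ ℝ`.  For every `k`,
`∫ p_k(x)/(x − z) dμ(x) = w(z) p_k(z) + r_k(z)`, where `w` is the Stieltjes transform of `μ`,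
and consequently (by Bessel's inequality)
`Σ_k |w(z) p_k(z) + r_k(z)|² ≤ ∫ |x − z|⁻² dμ(x) < ∞`. -/
theorem stieltjes_coefficients_bessel (μ : Measure ℝ) [IsProbabilityMeasure μ]
    (hmom : ∀ m : ℕ, Integrable (fun x : ℝ => |x| ^ m) μ)
    (hsupp : (measSupport μ).Infinite)
    (p : ℕ → Polynomial ℝ)
    (hdeg : ∀ n, (p n).degree = n)
    (hlead : ∀ n, 0 < (p n).leadingCoeff)
    (horth : ∀ n m, ∫ x, (p n).eval x * (p m).eval x ∂μ = if n = m then 1 else 0)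
    (a b : ℕ → ℝ) (hapos : ∀ k, 0 < a k)
    (hrec : ∀ k : ℕ, X * p (k + 1) =
      C (a (k + 1)) * p (k + 2) + C (b (k + 1)) * p (k + 1) + C (a k) * p k)
    (hrec0 : X * p 0 = C (a 0) * p 1 + C (b 0) * p 0)
    (r : ℕ → Polynomial ℝ)
    (hr0 : r 0 = 0) (hr1 : r 1 = C (a 0)⁻¹)
    (hrrec : ∀ k : ℕ, X * r (k + 1) =
      C (a (k + 1)) * r (k + 2) + C (b (k + 1)) * r (k + 1) + C (a k) * r k)
    (z : ℂ) (hz : z.im ≠ 0)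
    (w : ℂ) (hw : w = ∫ x : ℝ, ((x : ℂ) - z)⁻¹ ∂μ) :
    (∀ k : ℕ, ∫ x : ℝ, (((p k).eval x : ℝ) : ℂ) / ((x : ℂ) - z) ∂μ
        = w * Polynomial.aeval z (p k) + Polynomial.aeval z (r k)) ∧
    Integrable (fun x : ℝ => ‖(x : ℂ) - z‖⁻¹ ^ 2) μ ∧
    Summable (fun k : ℕ => ‖w * Polynomial.aeval z (p k) + Polynomial.aeval z (r k)‖ ^ 2) ∧
    ∑' k : ℕ, ‖w * Polynomial.aeval z (p k) + Polynomial.aeval z (r k)‖ ^ 2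
      ≤ ∫ x : ℝ, ‖(x : ℂ) - z‖⁻¹ ^ 2 ∂μ :=
  stieltjes_coefficients_bessel_general μ hmom p hdeg hlead horth a b hapos hrec hrec0 r hr0 hr1
    hrrec z hz w hw
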